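/- Let R be a (possibly noncommutative) ring and A, B, C ∈ R satisfy A² = 0, AB + BA = 0, AC + CA + B² = 0, BC + CB = 0, and C² = 0. Let N ∈ ℕ and let I₀, I₁, …, I_N ∈ R satisfy [A, I₀] = 0, [A, I₁] + [B, I₀] = 0, and [A, Iₙ] + [B, Iₙ₋₁] + [C, Iₙ₋₂] = 0 for all 2 ≤ n ≤ N, where [x, y] = xy − yx. Then, setting J := [B, I_N] + [C, I_{N−1}] (with the convention I_{−1} = 0 when N = 0), one has A·J + J·A = 0. In other words, the obstruction to solving the next order of the recursion for the metric is annihilated by the anticommutator with A. -/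

import Mathlib

/-!
Write `⁅x, y⁆ = x y - y x` and `{x, y} = x y + y x`. The super-Jacobi identity
`{a, ⁅b, x⁆} + {b, ⁅a, x⁆} = ⁅{a, b}, x⁆`, valid in any ring, lets one move `A` across the
obstruction `J = ⁅B, I_N⁆ + ⁅C, I_{N-1}⁆`; eliminating `⁅A, I_N⁆` and `⁅A, I_{N-1}⁆` with the
recursion at orders `N` and `N - 1` (reading `I_k = 0` for `k < 0`) leaves
`{A, J} = ⁅{A, B}, I_N⁆ + ⁅{A, C} + B², I_{N-1}⁆ + ⁅{B, C}, I_{N-2}⁆ + ⁅C², I_{N-3}⁆`,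
whose brackets vanish by the nilpotency relations.
-/

attribute [local instance] LieRing.ofAssociativeRing

section SuperJacobi

variable {R : Type*} [Ring R]

theorem anticomm_lie_add_anticomm_lie (a b x : R) :
    (a * ⁅b, x⁆ + ⁅b, x⁆ * a) + (b * ⁅a, x⁆ + ⁅a, x⁆ * b) = ⁅a * b + b * a, x⁆ := by
  simp only [Ring.lie_def]
  noncomm_ring

theorem anticomm_lie_self (b x : R) : b * ⁅b, x⁆ + ⁅b, x⁆ * b = ⁅b * b, x⁆ := by
  simp only [Ring.lie_def]
  noncomm_ring

theorem anticomm_obstruction_eq_zero (A B C x y z w : R)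
    (hAB : A * B + B * A = 0) (hACB : A * C + C * A + B * B = 0)
    (hBC : B * C + C * B = 0) (hC : C * C = 0)
    (hx : ⁅A, x⁆ + ⁅B, y⁆ + ⁅C, z⁆ = 0) (hy : ⁅A, y⁆ + ⁅B, z⁆ + ⁅C, w⁆ = 0) :
    A * (⁅B, x⁆ + ⁅C, y⁆) + (⁅B, x⁆ + ⁅C, y⁆) * A = 0 := by
  have hAx : ⁅A, x⁆ = -(⁅B, y⁆ + ⁅C, z⁆) :=
    eq_neg_of_add_eq_zero_left ((add_assoc _ _ _).symm.trans hx)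
  have hAy : ⁅A, y⁆ = -(⁅B, z⁆ + ⁅C, w⁆) :=
    eq_neg_of_add_eq_zero_left ((add_assoc _ _ _).symm.trans hy)
  have hABx := anticomm_lie_add_anticomm_lie A B x
  have hACy := anticomm_lie_add_anticomm_lie A C y
  calc A * (⁅B, x⁆ + ⁅C, y⁆) + (⁅B, x⁆ + ⁅C, y⁆) * A
      = ⁅A * B + B * A, x⁆ + ⁅A * C + C * A, y⁆ + (B * ⁅B, y⁆ + ⁅B, y⁆ * B)
          + ((B * ⁅C, z⁆ + ⁅C, z⁆ * B) + (C * ⁅B, z⁆ + ⁅B, z⁆ * C))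
          + (C * ⁅C, w⁆ + ⁅C, w⁆ * C) := by
        rw [← hABx, ← hACy, hAx, hAy]
        simp only [mul_add, add_mul, mul_neg, neg_mul]
        abel
    _ = ⁅A * B + B * A, x⁆ + ⁅A * C + C * A + B * B, y⁆ + ⁅B * C + C * B, z⁆ + ⁅C * C, w⁆ := by
        rw [anticomm_lie_self, anticomm_lie_self, anticomm_lie_add_anticomm_lie, add_lie _ (B * B)]
        abel
    _ = 0 := by rw [hAB, hACB, hBC, hC]; simp only [zero_lie, add_zero]

end SuperJacobi

theorem metric_recursion_obstruction_anticommutes_with_A_general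
    {R : Type*} [Ring R] (A B C : R)
    (h2 : A * B + B * A = 0)
    (h3 : A * C + C * A + B * B = 0)
    (h4 : B * C + C * B = 0)
    (h5 : C * C = 0)
    (N : ℕ) (I : ℕ → R)
    (hI0 : A * I 0 - I 0 * A = 0)
    (hI1 : 1 ≤ N → (A * I 1 - I 1 * A) + (B * I 0 - I 0 * B) = 0)
    (hIn : ∀ n : ℕ, 2 ≤ n → n ≤ N →
      (A * I n - I n * A) + (B * I (n - 1) - I (n - 1) * B)
        + (C * I (n - 2) - I (n - 2) * C) = 0)
    (J : R)
    (hJ : J = (B * I N - I N * B)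
        + (C * (if N = 0 then 0 else I (N - 1))
            - (if N = 0 then 0 else I (N - 1)) * C)) :
    A * J + J * A = 0 := by
  simp only [← Ring.lie_def] at hI0 hI1 hIn hJ
  subst hJ
  have key := fun y z w => anticomm_obstruction_eq_zero A B C (I N) y z w h2 h3 h4 h5
  rcases N with _ | _ | _ | n
  · simpa using key 0 0 0 (by simpa using hI0) (by simp)
  · simpa using key (I 0) 0 0 (by simpa using hI1 le_rfl) (by simpa using hI0)
  · simpa using key (I 1) (I 0) 0 (by simpa using hIn 2 le_rfl le_rfl)
      (by simpa using hI1 (by norm_num))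
  · simpa using key (I (n + 2)) (I (n + 1)) (I n) (hIn (n + 3) (by omega) le_rfl)
      (hIn (n + 2) (by omega) (by omega))

/-- Given ring elements `A, B, C` satisfying the order-by-order
nilpotency relations and a solution `I₀, …, I_N` of the commutator recursion
`[A, Iₙ] + [B, Iₙ₋₁] + [C, Iₙ₋₂] = 0`, the next-order obstruction
`J = [B, I_N] + [C, I_{N-1}]` (with `I_{-1} = 0` when `N = 0`) satisfies
`A·J + J·A = 0`. -/
theorem metric_recursion_obstruction_anticommutes_with_A
    {R : Type*} [Ring R] (A B C : R)
    (h1 : A * A = 0)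
    (h2 : A * B + B * A = 0)
    (h3 : A * C + C * A + B * B = 0)
    (h4 : B * C + C * B = 0)
    (h5 : C * C = 0)
    (N : ℕ) (I : ℕ → R)
    (hI0 : A * I 0 - I 0 * A = 0)
    (hI1 : 1 ≤ N → (A * I 1 - I 1 * A) + (B * I 0 - I 0 * B) = 0)
    (hIn : ∀ n : ℕ, 2 ≤ n → n ≤ N →
      (A * I n - I n * A) + (B * I (n - 1) - I (n - 1) * B)
        + (C * I (n - 2) - I (n - 2) * C) = 0)
    (J : R)
    (hJ : J = (B * I N - I N * B)
        + (C * (if N = 0 then 0 else I (N - 1))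
            - (if N = 0 then 0 else I (N - 1)) * C)) :
    A * J + J * A = 0 :=
  metric_recursion_obstruction_anticommutes_with_A_general A B C h2 h3 h4 h5 N I hI0 hI1 hIn J hJ
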